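/- arXiv:2010.06496 — 5 statements merged into one kernel-verified Lean document; each statement's English description precedes it below -/
import Mathlib

section
/- Let σ be a relational vocabulary with symbols of arity at most 2, let (𝒜,a) and (ℬ,b) be pointed Kripke structures, and let k ≥ 0. There exists a morphism of pointed structures f : M_k(𝒜,a) → (ℬ,b) if and only if a ≼_k b. -/
/-- A modal vocabulary: unary symbols (propositional variables) and binary symbols
(modalities); a relational vocabulary with symbols of arity at most 2. -/
structure ModalVocab : Type 1 where
  Prp : Type
  Act : Type

/-- A Kripke structure for a modal vocabulary. -/
structure Kripke (V : ModalVocab) : Type 1 where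
  carrier : Type
  unary : V.Prp → carrier → Prop
  rel : V.Act → carrier → carrier → Prop

/-- A homomorphism of Kripke structures. -/
def IsKHom {V : ModalVocab} (𝒜 ℬ : Kripke V) (h : 𝒜.carrier → ℬ.carrier) : Prop :=
  (∀ P x, 𝒜.unary P x → ℬ.unary P (h x)) ∧
  (∀ α x y, 𝒜.rel α x y → ℬ.rel α (h x) (h y))

/-- A morphism of pointed Kripke structures. -/
def IsPKHom {V : ModalVocab} (𝒜 : Kripke V) (a : 𝒜.carrier) (ℬ : Kripke V)
    (b : ℬ.carrier) (h : 𝒜.carrier → ℬ.carrier) : Prop :=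
  IsKHom 𝒜 ℬ h ∧ h a = b

/-- `chainFrom 𝒜 x l` : the list `l = [(α₁,a₁),…,(αⱼ,aⱼ)]` is a path of transitions
starting at `x`, i.e. `x →^{α₁} a₁ →^{α₂} ⋯ →^{αⱼ} aⱼ`. -/
def chainFrom {V : ModalVocab} (𝒜 : Kripke V) : 𝒜.carrier → List (V.Act × 𝒜.carrier) → Prop
  | _, [] => True
  | x, (α, y) :: l => 𝒜.rel α x y ∧ chainFrom 𝒜 y l

/-- The last element of a path starting at `x`. -/
def lastFrom {V : ModalVocab} (𝒜 : Kripke V) : 𝒜.carrier → List (V.Act × 𝒜.carrier) → 𝒜.carrier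
  | x, [] => x
  | _, (_, y) :: l => lastFrom 𝒜 y l

theorem chainFrom_take {V : ModalVocab} (𝒜 : Kripke V)
    (l : List (V.Act × 𝒜.carrier)) :
    ∀ (x : 𝒜.carrier) (n : ℕ), chainFrom 𝒜 x l → chainFrom 𝒜 x (l.take n) := by
  induction l with
  | nil => intro x n h; simpa using h
  | cons p l ih =>
    intro x n h
    cases n with
    | zero => simp [chainFrom]
    | succ n =>
      obtain ⟨α, y⟩ := p
      exact ⟨h.1, ih y n h.2⟩

/-- The universe of `M_k (𝒜, a)`: a sequence `[a, α₁, a₁, …, αⱼ, aⱼ]` with `j ≤ k`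
which is a path of transitions from `a`, represented by its list of steps. -/
def MkC {V : ModalVocab} (𝒜 : Kripke V) (a : 𝒜.carrier) (k : ℕ) : Type :=
  {l : List (V.Act × 𝒜.carrier) // l.length ≤ k ∧ chainFrom 𝒜 a l}

/-- The distinguished element `[a]` of `M_k (𝒜, a)`. -/
def mpt {V : ModalVocab} (𝒜 : Kripke V) (a : 𝒜.carrier) (k : ℕ) : MkC 𝒜 a k :=
  ⟨[], Nat.zero_le k, trivial⟩

/-- The counit: the last element of a sequence. -/
def meps {V : ModalVocab} {𝒜 : Kripke V} {a : 𝒜.carrier} {k : ℕ} (s : MkC 𝒜 a k) :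
    𝒜.carrier :=
  lastFrom 𝒜 a s.1

/-- The modal comonad: the Kripke structure `M_k (𝒜, a)`. -/
def MkS {V : ModalVocab} (𝒜 : Kripke V) (a : 𝒜.carrier) (k : ℕ) : Kripke V where
  carrier := MkC 𝒜 a k
  unary P s := 𝒜.unary P (meps s)
  rel α s t := ∃ a', t.1 = s.1 ++ [(α, a')]

/-- The prefix of `s` of length `i+1`. -/
def mPrefAt {V : ModalVocab} {𝒜 : Kripke V} {a : 𝒜.carrier} {k : ℕ} (s : MkC 𝒜 a k)
    (i : Fin s.1.length) : MkC 𝒜 a k :=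
  ⟨s.1.take (i + 1),
    le_trans (by rw [List.length_take]; exact min_le_right _ _) s.2.1,
    chainFrom_take 𝒜 s.1 a (i + 1) s.2.2⟩

/-- `F` is the Kleisli coextension of `f`, i.e. `F` is the map `f*` determined by
`f*[a] = [b]` and `f*(s[α,a']) = f*(s)[α, f(s[α,a'])]`. -/
def IsMCoext {V : ModalVocab} {𝒜 ℬ : Kripke V} {a : 𝒜.carrier} {b : ℬ.carrier} {k : ℕ}
    (f : MkC 𝒜 a k → ℬ.carrier) (F : MkC 𝒜 a k → MkC ℬ b k) : Prop :=
  ∀ s, (F s).1 = List.ofFn (fun i : Fin s.1.length => ((s.1.get i).1, f (mPrefAt s i)))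

/-- The simulation approximants `a ≼_k b`. -/
def simA {V : ModalVocab} (𝒜 ℬ : Kripke V) : ℕ → 𝒜.carrier → ℬ.carrier → Prop
  | 0, a, b => ∀ P, 𝒜.unary P a → ℬ.unary P b
  | k + 1, a, b =>
    (∀ P, 𝒜.unary P a → ℬ.unary P b) ∧
    (∀ α a', 𝒜.rel α a a' → ∃ b', ℬ.rel α b b' ∧ simA 𝒜 ℬ k a' b')

lemma simA_unary {V : ModalVocab} {𝒜 ℬ : Kripke V} {n : ℕ} {a : 𝒜.carrier}
    {b : ℬ.carrier} (h : simA 𝒜 ℬ n a b) : ∀ P, 𝒜.unary P a → ℬ.unary P b := by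
  cases n with
  | zero => exact h
  | succ m => exact h.1

lemma lastFrom_append_single {V : ModalVocab} (𝒜 : Kripke V)
    (l : List (V.Act × 𝒜.carrier)) :
    ∀ (x : 𝒜.carrier) (α : V.Act) (a' : 𝒜.carrier),
      lastFrom 𝒜 x (l ++ [(α, a')]) = a' := by
  induction l with
  | nil => intro x α a'; rfl
  | cons p l ih =>
    intro x α a'
    obtain ⟨β, y⟩ := p
    exact ih y α a'

lemma chainFrom_append_single {V : ModalVocab} (𝒜 : Kripke V)
    (l : List (V.Act × 𝒜.carrier)) :
    ∀ (x : 𝒜.carrier) (α : V.Act) (a' : 𝒜.carrier),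
      chainFrom 𝒜 x (l ++ [(α, a')]) ↔
        chainFrom 𝒜 x l ∧ 𝒜.rel α (lastFrom 𝒜 x l) a' := by
  induction l with
  | nil =>
    intro x α a'
    simp [chainFrom, lastFrom]
  | cons p l ih =>
    intro x α a'
    obtain ⟨β, y⟩ := p
    constructor
    · rintro ⟨h1, h2⟩
      obtain ⟨h3, h4⟩ := (ih y α a').mp h2
      exact ⟨⟨h1, h3⟩, h4⟩
    · rintro ⟨⟨h1, h3⟩, h4⟩
      exact ⟨h1, (ih y α a').mpr ⟨h3, h4⟩⟩

open Classical in
/-- The choice function used to build a homomorphism from a simulation. -/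
noncomputable def simPick {V : ModalVocab} (𝒜 ℬ : Kripke V) :
    List (V.Act × 𝒜.carrier) → 𝒜.carrier → ℬ.carrier → ℕ → ℬ.carrier
  | [], _, y, _ => y
  | (_, _) :: _, _, y, 0 => y
  | (α, a') :: l, _, y, n + 1 =>
    if h : ∃ b', ℬ.rel α y b' ∧ simA 𝒜 ℬ n a' b' then
      simPick 𝒜 ℬ l a' h.choose n
    else y

lemma simPick_inv {V : ModalVocab} (𝒜 ℬ : Kripke V)
    (l : List (V.Act × 𝒜.carrier)) :
    ∀ (x : 𝒜.carrier) (n : ℕ) (y : ℬ.carrier), simA 𝒜 ℬ n x y →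
      chainFrom 𝒜 x l → l.length ≤ n →
      simA 𝒜 ℬ (n - l.length) (lastFrom 𝒜 x l) (simPick 𝒜 ℬ l x y n) := by
  induction l with
  | nil => intro x n y hsim _ _; simpa [simPick, lastFrom] using hsim
  | cons p l ih =>
    intro x n y hsim hch hlen
    obtain ⟨α, a'⟩ := p
    cases n with
    | zero => simp at hlen
    | succ m =>
      have h : ∃ b', ℬ.rel α y b' ∧ simA 𝒜 ℬ m a' b' := hsim.2 α a' hch.1
      simp only [simPick, dif_pos h, List.length_cons, lastFrom, Nat.succ_sub_succ]
      exact ih a' m h.choose h.choose_spec.2 hch.2 (Nat.succ_le_succ_iff.mp hlen)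

lemma simPick_append {V : ModalVocab} (𝒜 ℬ : Kripke V)
    (l : List (V.Act × 𝒜.carrier)) :
    ∀ (x : 𝒜.carrier) (n : ℕ) (y : ℬ.carrier) (α : V.Act) (a' : 𝒜.carrier),
      simA 𝒜 ℬ n x y → chainFrom 𝒜 x (l ++ [(α, a')]) → l.length + 1 ≤ n →
      ℬ.rel α (simPick 𝒜 ℬ l x y n) (simPick 𝒜 ℬ (l ++ [(α, a')]) x y n) := by
  induction l with
  | nil =>
    intro x n y α a' hsim hch hlen
    cases n with
    | zero => simp at hlen
    | succ m =>
      have h : ∃ b', ℬ.rel α y b' ∧ simA 𝒜 ℬ m a' b' := hsim.2 α a' hch.1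
      simp only [List.nil_append, simPick, dif_pos h]
      exact h.choose_spec.1
  | cons p l ih =>
    intro x n y α a' hsim hch hlen
    obtain ⟨β, c⟩ := p
    cases n with
    | zero => simp at hlen
    | succ m =>
      have h : ∃ b', ℬ.rel β y b' ∧ simA 𝒜 ℬ m c b' := hsim.2 β c hch.1
      simp only [List.cons_append, simPick, dif_pos h]
      exact ih c m h.choose α a' h.choose_spec.2 hch.2 (Nat.succ_le_succ_iff.mp hlen)

/-- There is a morphism of pointed structures `M_k(𝒜,a) → (ℬ,b)` iff `a ≼_k b`. -/
theorem stmt5 (V : ModalVocab) (𝒜 ℬ : Kripke V) (a : 𝒜.carrier) (b : ℬ.carrier)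
    (k : ℕ) :
    (∃ f : MkC 𝒜 a k → ℬ.carrier, IsPKHom (MkS 𝒜 a k) (mpt 𝒜 a k) ℬ b f) ↔
    simA 𝒜 ℬ k a b := by
  constructor
  · rintro ⟨f, ⟨hU, hR⟩, hpt⟩
    have key : ∀ (m : ℕ) (s : MkC 𝒜 a k), s.1.length + m ≤ k →
        simA 𝒜 ℬ m (meps s) (f s) := by
      intro m
      induction m with
      | zero => intro s _; exact fun P hP => hU P s hP
      | succ m ih =>
        intro s hlen
        refine ⟨fun P hP => hU P s hP, fun α a' hrel => ?_⟩
        have hch : chainFrom 𝒜 a (s.1 ++ [(α, a')]) :=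
          (chainFrom_append_single 𝒜 s.1 a α a').mpr ⟨s.2.2, hrel⟩
        have hlen' : (s.1 ++ [(α, a')]).length ≤ k := by
          simp only [List.length_append, List.length_singleton]
          omega
        let t : MkC 𝒜 a k := ⟨s.1 ++ [(α, a')], hlen', hch⟩
        have hmeps : meps t = a' := lastFrom_append_single 𝒜 s.1 a α a'
        refine ⟨f t, hR α s t ⟨a', rfl⟩, ?_⟩
        have := ih t (by simp only [t, List.length_append, List.length_singleton]; omega)
        rwa [hmeps] at this
    have h0 : (mpt 𝒜 a k).1.length + k ≤ k := by simp [mpt]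
    have := key k (mpt 𝒜 a k) h0
    rwa [show meps (mpt 𝒜 a k) = a from rfl, hpt] at this
  · intro hsim
    refine ⟨fun s => simPick 𝒜 ℬ s.1 a b k, ⟨⟨?_, ?_⟩, rfl⟩⟩
    · intro P s hP
      exact simA_unary (simPick_inv 𝒜 ℬ s.1 a k b hsim s.2.2 s.2.1) P hP
    · rintro α s t ⟨a', ht⟩
      have hch : chainFrom 𝒜 a (s.1 ++ [(α, a')]) := by rw [← ht]; exact t.2.2
      have hlen : s.1.length + 1 ≤ k := by
        have := t.2.1
        rw [ht] at this
        simpa using this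
      have := simPick_append 𝒜 ℬ s.1 a k b α a' hsim hch hlen
      rwa [← ht] at this
end

section
/- Let σ be a relational vocabulary, 𝒜 and ℬ σ-structures, and k ≥ 1. If f : E_k 𝒜 → ℬ and g : E_k ℬ → 𝒜 are homomorphisms which are both I-morphisms, and s ∈ A^{≤k}, t ∈ B^{≤k} satisfy f*(s) = t and g*(t) = s, then, writing s = [a_1,…,a_n] and t = [b_1,…,b_n], the relation {(a_i, b_i) : 1 ≤ i ≤ n} is a partial isomorphism from 𝒜 to ℬ. -/
/-- A relational vocabulary: a type of relation symbols with arities. -/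
structure RelVocab : Type 1 where
  Rel : Type
  ar : Rel → ℕ

/-- A structure for a relational vocabulary. -/
structure RelStruct (σ : RelVocab) : Type 1 where
  carrier : Type
  rel : ∀ R : σ.Rel, (Fin (σ.ar R) → carrier) → Prop

/-- Homomorphisms of relational structures. -/
def IsHom {σ : RelVocab} (𝒜 ℬ : RelStruct σ) (h : 𝒜.carrier → ℬ.carrier) : Prop :=
  ∀ (R : σ.Rel) (v : Fin (σ.ar R) → 𝒜.carrier), 𝒜.rel R v → ℬ.rel R (fun i => h (v i))

/-- Nonempty sequences over `A` of length at most `k`: the universe of `E_k 𝒜`. -/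
def EkC (k : ℕ) (A : Type) : Type :=
  {l : List A // l ≠ [] ∧ l.length ≤ k}

/-- The counit: the last element of a sequence. -/
def eps {k : ℕ} {A : Type} (s : EkC k A) : A :=
  s.1.getLast s.2.1

/-- Comparability in the prefix order. -/
def Cmp {A : Type} (s t : List A) : Prop :=
  s <+: t ∨ t <+: s

/-- The Ehrenfeucht–Fraïssé comonad `E_k` on structures. -/
def Ek {σ : RelVocab} (k : ℕ) (𝒜 : RelStruct σ) : RelStruct σ where
  carrier := EkC k 𝒜.carrier
  rel R v := (∀ i j, Cmp (v i).1 (v j).1) ∧ 𝒜.rel R (fun i => eps (v i))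

/-- The prefix of `s` of length `i+1`. -/
def prefAt {k : ℕ} {A : Type} (s : EkC k A) (i : Fin s.1.length) : EkC k A :=
  ⟨s.1.take (i + 1), by
    constructor
    · apply List.ne_nil_of_length_pos
      rw [List.length_take]
      exact lt_min (Nat.succ_pos _) (Nat.lt_of_le_of_lt (Nat.zero_le _) i.2)
    · rw [List.length_take]
      exact le_trans (min_le_right _ _) s.2.2⟩

/-- The Kleisli coextension `f* [a_1,…,a_j] = [f[a_1],…,f[a_1,…,a_j]]`. -/
def coext {k : ℕ} {A B : Type} (f : EkC k A → B) (s : EkC k A) : EkC k B :=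
  ⟨List.ofFn (fun i : Fin s.1.length => f (prefAt s i)), by
    constructor
    · apply List.ne_nil_of_length_pos
      rw [List.length_ofFn]
      exact List.length_pos_iff.mpr s.2.1
    · rw [List.length_ofFn]
      exact s.2.2⟩

/-- A partial homomorphism from `𝒜` to `ℬ`: a finite relation, single-valued on its
domain, preserving all relations where defined. -/
def IsPHom {σ : RelVocab} (𝒜 ℬ : RelStruct σ) (r : Set (𝒜.carrier × ℬ.carrier)) : Prop :=
  r.Finite ∧
  (∀ a b b', (a, b) ∈ r → (a, b') ∈ r → b = b') ∧
  (∀ (R : σ.Rel) (v : Fin (σ.ar R) → 𝒜.carrier) (w : Fin (σ.ar R) → ℬ.carrier),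
    (∀ i, (v i, w i) ∈ r) → 𝒜.rel R v → ℬ.rel R w)

/-- The converse of a relation. -/
def conv {A B : Type} (r : Set (A × B)) : Set (B × A) :=
  {q | (q.2, q.1) ∈ r}

/-- A partial isomorphism: a partial homomorphism whose converse is a partial
homomorphism. -/
def IsPIso {σ : RelVocab} (𝒜 ℬ : RelStruct σ) (r : Set (𝒜.carrier × ℬ.carrier)) : Prop :=
  IsPHom 𝒜 ℬ r ∧ IsPHom ℬ 𝒜 (conv r)

/-- The I-morphism condition for a coKleisli morphism `E_k 𝒜 → ℬ`. -/
def IMor {k : ℕ} {A B : Type} (f : EkC k A → B) : Prop :=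
  ∀ s t : EkC k A, s.1 <+: t.1 → eps s = eps t → f s = f t

namespace EkC

variable {k : ℕ} {A B : Type}

lemma eps_prefAt (s : EkC k A) (i : Fin s.1.length) : eps (prefAt s i) = s.1[i] := by
  simp [eps, prefAt, List.getLast_take]

lemma prefAt_prefix_of_le (s : EkC k A) {i j : Fin s.1.length} (hij : i ≤ j) :
    (prefAt s i).1 <+: (prefAt s j).1 :=
  List.take_prefix_take_left (Nat.succ_le_succ hij)

lemma cmp_prefAt (s : EkC k A) (i j : Fin s.1.length) : Cmp (prefAt s i).1 (prefAt s j).1 :=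
  (le_total i j).imp (prefAt_prefix_of_le s) (prefAt_prefix_of_le s)

lemma zip_coext (f : EkC k A → B) (s : EkC k A) :
    s.1.zip (coext f s).1 = List.ofFn fun i => (s.1[i], f (prefAt s i)) :=
  List.ext_getElem (by simp [coext]) fun _ _ _ => by simp [coext]

lemma mem_zip_coext {f : EkC k A → B} {s : EkC k A} {p : A × B} :
    p ∈ s.1.zip (coext f s).1 ↔ ∃ i, (s.1[i], f (prefAt s i)) = p := by
  rw [zip_coext, List.mem_ofFn]

lemma _root_.IMor.apply_prefAt_eq {f : EkC k A → B} (hf : IMor f) (s : EkC k A)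
    {i j : Fin s.1.length} (hij : s.1[i] = s.1[j]) : f (prefAt s i) = f (prefAt s j) := by
  rcases le_total i j with hle | hle
  · exact hf _ _ (prefAt_prefix_of_le s hle) (by rw [eps_prefAt, eps_prefAt, hij])
  · exact (hf _ _ (prefAt_prefix_of_le s hle) (by rw [eps_prefAt, eps_prefAt, hij])).symm

end EkC

open EkC

/- Single-valuedness is the I-morphism property; a tuple of entries of `s` lifts to the pairwise
comparable prefixes of `s` ending in them, on which `f` is a homomorphism. -/
lemma isPHom_zip_coext {σ : RelVocab} {𝒜 ℬ : RelStruct σ} {k : ℕ}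
    {f : EkC k 𝒜.carrier → ℬ.carrier} (hf : IsHom (Ek k 𝒜) ℬ f) (hfI : IMor f)
    (s : EkC k 𝒜.carrier) : IsPHom 𝒜 ℬ {p | p ∈ s.1.zip (coext f s).1} := by
  refine ⟨List.finite_toSet _, ?_, ?_⟩
  · rintro a b b' hb hb'
    obtain ⟨i, hi⟩ := mem_zip_coext.1 hb
    obtain ⟨j, hj⟩ := mem_zip_coext.1 hb'
    simp only [Prod.mk.injEq] at hi hj
    rw [← hi.2, ← hj.2]
    exact hfI.apply_prefAt_eq s (hi.1.trans hj.1.symm)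
  · intro R v w hvw hv
    choose m hm using fun x => mem_zip_coext.1 (hvw x)
    simp only [Prod.mk.injEq] at hm
    have hlift : (Ek k 𝒜).rel R fun x => prefAt s (m x) := by
      refine ⟨fun x y => cmp_prefAt s _ _, ?_⟩
      simpa only [eps_prefAt, fun x => (hm x).1] using hv
    simpa only [fun x => (hm x).2] using hf R _ hlift

lemma conv_setOf_mem_zip {A B : Type} (l : List A) (l' : List B) :
    conv {p | p ∈ l.zip l'} = {p | p ∈ l'.zip l} := by
  ext ⟨b, a⟩
  simp only [conv, Set.mem_ofPred_eq, ← List.zip_swap l l', List.mem_map]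
  constructor
  · exact fun h => ⟨(a, b), h, rfl⟩
  · rintro ⟨⟨a', b'⟩, h, heq⟩
    cases heq
    exact h

theorem stmt6_general (σ : RelVocab) (𝒜 ℬ : RelStruct σ) (k : ℕ)
    (f : EkC k 𝒜.carrier → ℬ.carrier) (g : EkC k ℬ.carrier → 𝒜.carrier)
    (hf : IsHom (Ek k 𝒜) ℬ f) (hg : IsHom (Ek k ℬ) 𝒜 g)
    (hfI : IMor f) (hgI : IMor g)
    (s : EkC k 𝒜.carrier) (t : EkC k ℬ.carrier)
    (hst : coext f s = t) (hts : coext g t = s) :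
    IsPIso 𝒜 ℬ {p | p ∈ s.1.zip t.1} := by
  refine ⟨hst ▸ isPHom_zip_coext hf hfI s, ?_⟩
  rw [conv_setOf_mem_zip]
  exact hts ▸ isPHom_zip_coext hg hgI t

/-- If `f : E_k 𝒜 → ℬ` and `g : E_k ℬ → 𝒜` are I-morphisms and `f*(s) = t`, `g*(t) = s`,
then `(s,t)` defines a partial isomorphism from `𝒜` to `ℬ`. -/
theorem stmt6 (σ : RelVocab) (𝒜 ℬ : RelStruct σ) (k : ℕ) (hk : 1 ≤ k)
    (f : EkC k 𝒜.carrier → ℬ.carrier) (g : EkC k ℬ.carrier → 𝒜.carrier)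
    (hf : IsHom (Ek k 𝒜) ℬ f) (hg : IsHom (Ek k ℬ) 𝒜 g)
    (hfI : IMor f) (hgI : IMor g)
    (s : EkC k 𝒜.carrier) (t : EkC k ℬ.carrier)
    (hst : coext f s = t) (hts : coext g t = s) :
    IsPIso 𝒜 ℬ {p | p ∈ s.1.zip t.1} :=
  stmt6_general σ 𝒜 ℬ k f g hf hg hfI hgI s t hst hts
end

section
/- Let σ be a relational vocabulary, 𝒜 and ℬ finite σ-structures, and k ≥ 1. The following are equivalent: (1) there exist I-morphisms f : E_k 𝒜 → ℬ and g : E_k ℬ → 𝒜 with g ∘ f* = ε_𝒜 and f ∘ g* = ε_ℬ (i.e., 𝒜 and ℬ are isomorphic in the coKleisli category via I-morphisms); (2) Duplicator has a winning strategy in the k-round bijection game from 𝒜 to ℬ, i.e., there is a family of bijections ψ_s : A → B, indexed by the sequences s over A of length < k (including the empty sequence), such that for every [a_1,…,a_j] with j ≤ k, the relation {(a_i, b_i) : 1 ≤ i ≤ j}, where b_i = ψ_{[a_1,…,a_{i−1}]}(a_i), is a partial isomorphism from 𝒜 to ℬ. -/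
/-!
The relation traced by a play `l = [a₁,…,aⱼ]` under a coKleisli morphism `F` is
`{(aᵢ, F[a₁,…,aᵢ])}`, the zip of `l` with `F* l`. `F` is a homomorphism and an I-morphism exactly
when all these relations are partial homomorphisms: relations of `E_k 𝒜` live on chains, and
chains are prefixes of one play. If `g ∘ f* = ε`, the converse of the relation of `f` along `l`
is the relation of `g` along `f* l`, so a coKleisli isomorphism yields partial isomorphisms.

The strategy read off from `f, g` answers in position `l` with `a ↦ f (l ++ [a])`, whose inverse
is `b ↦ g (f* l ++ [b])`. Conversely, a strategy `ψ` gives `f s = ψ_{s.dropLast} (last s)`, and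
`g` translates a play in `ℬ` back into `𝒜` move by move through the inverses of the `ψ`.
-/

namespace EkC

variable {k : ℕ} {A B : Type}

def takeSucc (l : List A) (hl : l.length ≤ k) (i : ℕ) (hi : i < l.length) : EkC k A :=
  ⟨l.take (i + 1), List.ne_nil_of_length_pos (by simp; omega), by simp; omega⟩

def snoc (l : List A) (hl : l.length < k) (a : A) : EkC k A :=
  ⟨l ++ [a], by simp, by simp; omega⟩

lemma eps_takeSucc (l : List A) (hl : l.length ≤ k) (i : ℕ) (hi : i < l.length) :
    eps (takeSucc l hl i hi) = l[i] := by
  simp only [eps, takeSucc, List.getLast_eq_getElem, List.getElem_take, List.length_take]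
  congr; omega

lemma eps_snoc (l : List A) (hl : l.length < k) (a : A) : eps (snoc l hl a) = a :=
  List.getLast_concat

lemma eq_takeSucc_of_prefix {s : EkC k A} {l : List A} (hl : l.length ≤ k) (h : s.1 <+: l) :
    s = takeSucc l hl (s.1.length - 1)
      (by have := h.length_le; have := List.length_pos_iff.2 s.2.1; omega) := by
  apply Subtype.ext
  simp only [takeSucc, Nat.sub_add_cancel (List.length_pos_iff.2 s.2.1)]
  exact List.prefix_iff_eq_take.1 h

def coextList (F : EkC k A → B) (l : List A) (hl : l.length ≤ k) : List B :=
  List.ofFn fun i : Fin l.length => F (takeSucc l hl i i.2)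

@[simp] lemma length_coextList (F : EkC k A → B) (l : List A) (hl : l.length ≤ k) :
    (coextList F l hl).length = l.length :=
  List.length_ofFn

lemma getElem_coextList (F : EkC k A → B) (l : List A) (hl : l.length ≤ k) (i : ℕ)
    (hi : i < (coextList F l hl).length) :
    (coextList F l hl)[i] = F (takeSucc l hl i (by simpa using hi)) :=
  List.getElem_ofFn ..

lemma val_coext (F : EkC k A → B) (s : EkC k A) : (coext F s).1 = coextList F s.1 s.2.2 := rfl

lemma eps_coext (F : EkC k A → B) (s : EkC k A) : eps (coext F s) = F s := by
  simp only [eps, val_coext, List.getLast_eq_getElem, getElem_coextList]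
  convert congrArg F (eq_takeSucc_of_prefix s.2.2 List.prefix_rfl).symm using 3
  simp

lemma coextList_append_singleton (F : EkC k A → B) (l : List A) (a : A)
    (h : (l ++ [a]).length ≤ k) :
    coextList F (l ++ [a]) h =
      coextList F l (by simp at h; omega) ++ [F (snoc l (by simp at h; omega) a)] := by
  apply List.ext_getElem (by simp)
  intro i h₁ h₂
  simp only [getElem_coextList, List.getElem_append, length_coextList]
  split_ifs with hi
  · congr 1
    apply Subtype.ext
    simp [takeSucc, List.take_append, Nat.sub_eq_zero_of_le hi]
  · obtain rfl : i = l.length := by simp at h₁; omega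
    simp only [Nat.sub_self, List.getElem_singleton]
    congr 1
    apply Subtype.ext
    simp [takeSucc, snoc]

lemma coext_snoc (F : EkC k A → B) (l : List A) (hl : l.length < k) (a : A) :
    coext F (snoc l hl a) = snoc (coextList F l hl.le) (by simpa) (F (snoc l hl a)) :=
  Subtype.ext (coextList_append_singleton F l a (snoc l hl a).2.2)

lemma coextList_coextList {f : EkC k A → B} {g : EkC k B → A}
    (hgf : ∀ s, g (coext f s) = eps s) (l : List A) (hl : l.length ≤ k) :
    coextList g (coextList f l hl) (by simpa) = l := by
  induction l using List.reverseRecOn with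
  | nil => rfl
  | append_singleton l a ih =>
    simp only [coextList_append_singleton, ih, ← coext_snoc, hgf, eps_snoc]

end EkC

section Play

open EkC

variable {k : ℕ} {A B : Type}

def playRel (F : EkC k A → B) (l : List A) (hl : l.length ≤ k) : Set (A × B) :=
  {p | p ∈ l.zip (coextList F l hl)}

lemma mem_playRel_iff_getElem {F : EkC k A → B} {l : List A} {hl : l.length ≤ k}
    {p : A × B} :
    p ∈ playRel F l hl ↔ ∃ i, ∃ hi : i < l.length, (l[i], F (takeSucc l hl i hi)) = p := by
  simp only [playRel, Set.mem_ofPred_eq, List.mem_iff_getElem, List.getElem_zip,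
    getElem_coextList, List.length_zip, length_coextList, min_self]

lemma mem_playRel_iff_prefix {F : EkC k A → B} {l : List A} {hl : l.length ≤ k} {p : A × B} :
    p ∈ playRel F l hl ↔ ∃ s : EkC k A, s.1 <+: l ∧ (eps s, F s) = p := by
  rw [mem_playRel_iff_getElem]
  constructor
  · rintro ⟨i, hi, rfl⟩
    exact ⟨takeSucc l hl i hi, List.take_prefix _ _, by rw [eps_takeSucc]⟩
  · rintro ⟨s, hs, rfl⟩
    rw [eq_takeSucc_of_prefix hl hs, eps_takeSucc]
    exact ⟨_, _, rfl⟩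

lemma conv_playRel {f : EkC k A → B} {g : EkC k B → A} (hgf : ∀ s, g (coext f s) = eps s)
    (l : List A) (hl : l.length ≤ k) :
    conv (playRel f l hl) = playRel g (coextList f l hl) (by simpa) := by
  ext ⟨b, a⟩
  change (a, b) ∈ l.zip _ ↔ (b, a) ∈ (coextList f l hl).zip _
  rw [coextList_coextList hgf, ← List.zip_swap, List.mem_map]
  exact ⟨fun ⟨_, h, he⟩ => by cases he; exact h, fun h => ⟨_, h, rfl⟩⟩

lemma exists_prefix_of_pairwise_cmp {ι : Type*} [Finite ι] (v : ι → EkC k A)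
    (hv : ∀ i j, Cmp (v i).1 (v j).1) :
    ∃ l : List A, l.length ≤ k ∧ ∀ i, (v i).1 <+: l := by
  rcases isEmpty_or_nonempty ι with hι | hι
  · exact ⟨[], Nat.zero_le k, isEmptyElim⟩
  obtain ⟨i₀, hi₀⟩ := Finite.exists_max fun i => (v i).1.length
  refine ⟨(v i₀).1, (v i₀).2.2, fun i => ?_⟩
  rcases hv i i₀ with h | h
  · exact h
  · exact h.eq_of_length_le (hi₀ i) ▸ List.prefix_rfl

variable {σ : RelVocab} {𝒜 ℬ : RelStruct σ} {F : EkC k 𝒜.carrier → ℬ.carrier}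

lemma isPHom_playRel (hF : IsHom (Ek k 𝒜) ℬ F) (hI : IMor F) (l : List 𝒜.carrier)
    (hl : l.length ≤ k) : IsPHom 𝒜 ℬ (playRel F l hl) := by
  refine ⟨List.finite_toSet _, ?_, ?_⟩
  · intro a b b' hb hb'
    obtain ⟨s, hs, hsb⟩ := mem_playRel_iff_prefix.1 hb
    obtain ⟨t, ht, htb⟩ := mem_playRel_iff_prefix.1 hb'
    simp only [Prod.mk.injEq] at hsb htb
    rw [← hsb.2, ← htb.2]
    rcases List.prefix_or_prefix_of_prefix hs ht with hst | hts
    · exact hI s t hst (hsb.1.trans htb.1.symm)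
    · exact (hI t s hts (htb.1.trans hsb.1.symm)).symm
  · intro R v w hvw hv
    choose s hs hsvw using fun i => mem_playRel_iff_prefix.1 (hvw i)
    obtain rfl : v = fun i => eps (s i) := funext fun i => (congrArg Prod.fst (hsvw i)).symm
    obtain rfl : w = fun i => F (s i) := funext fun i => (congrArg Prod.snd (hsvw i)).symm
    exact hF R s ⟨fun i j => List.prefix_or_prefix_of_prefix (hs i) (hs j), hv⟩

lemma isHom_of_isPHom_playRel (h : ∀ l hl, IsPHom 𝒜 ℬ (playRel F l hl)) :
    IsHom (Ek k 𝒜) ℬ F := by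
  rintro R v ⟨hcmp, hv⟩
  obtain ⟨l, hl, hpre⟩ := exists_prefix_of_pairwise_cmp v hcmp
  exact (h l hl).2.2 R _ _ (fun i => mem_playRel_iff_prefix.2 ⟨v i, hpre i, rfl⟩) hv

lemma iMor_of_isPHom_playRel (h : ∀ l hl, IsPHom 𝒜 ℬ (playRel F l hl)) : IMor F := by
  intro s t hst hst'
  refine (h t.1 t.2.2).2.1 (eps s) _ _ (mem_playRel_iff_prefix.2 ⟨s, hst, rfl⟩) ?_
  exact hst' ▸ mem_playRel_iff_prefix.2 ⟨t, List.prefix_rfl, rfl⟩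

end Play

section Strategy

open EkC

variable {k : ℕ} {A B : Type}

def duplicatorRel (ψ : List A → A ≃ B) (l : List A) : Set (A × B) :=
  {p | ∃ i : Fin l.length, p = (l.get i, ψ (l.take i) (l.get i))}

lemma duplicatorRel_eq_playRel {ψ : List A → A ≃ B} {F : EkC k A → B} {l : List A}
    (hl : l.length ≤ k)
    (h : ∀ i (hi : i < l.length), F (takeSucc l hl i hi) = ψ (l.take i) l[i]) :
    duplicatorRel ψ l = playRel F l hl := by
  ext p
  simp only [duplicatorRel, Set.mem_ofPred_eq, mem_playRel_iff_getElem, h, Fin.exists_iff,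
    List.get_eq_getElem, eq_comm]

/-- Plays longer than `k - 1` are truncated, so that `ψ` is a bijection at every list. -/
def coKleisliStrategy (hk : 1 ≤ k) {f : EkC k A → B} {g : EkC k B → A}
    (hgf : ∀ s, g (coext f s) = eps s) (hfg : ∀ t, f (coext g t) = eps t) (l : List A) :
    A ≃ B :=
  have hl : (l.take (k - 1)).length < k := by simp; omega
  have hm : (coextList f _ hl.le).length < k := by rwa [length_coextList]
  { toFun := fun a => f (snoc _ hl a)
    invFun := fun b => g (snoc _ hm b)
    left_inv := fun a => by simp only [← coext_snoc, hgf, eps_snoc]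
    right_inv := fun b => by
      have : snoc _ hl (g (snoc _ hm b)) = coext g (snoc _ hm b) := by
        rw [coext_snoc]
        exact Subtype.ext (by simp only [snoc, coextList_coextList hgf])
      simp only [this, hfg, eps_snoc] }

lemma coKleisliStrategy_take (hk : 1 ≤ k) {f : EkC k A → B} {g : EkC k B → A}
    (hgf : ∀ s, g (coext f s) = eps s) (hfg : ∀ t, f (coext g t) = eps t) (l : List A)
    (hl : l.length ≤ k) (i : ℕ) (hi : i < l.length) :
    coKleisliStrategy hk hgf hfg (l.take i) l[i] = f (takeSucc l hl i hi) := by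
  change f _ = f _
  congr 1
  apply Subtype.ext
  simp only [snoc, takeSucc, List.take_take, min_eq_right (show i ≤ k - 1 by omega),
    List.take_append_getElem]

theorem isPIso_duplicatorRel_coKleisliStrategy {σ : RelVocab} {𝒜 ℬ : RelStruct σ}
    (hk : 1 ≤ k) {f : EkC k 𝒜.carrier → ℬ.carrier} {g : EkC k ℬ.carrier → 𝒜.carrier}
    (hf : IsHom (Ek k 𝒜) ℬ f) (hg : IsHom (Ek k ℬ) 𝒜 g) (hIf : IMor f) (hIg : IMor g)
    (hgf : ∀ s, g (coext f s) = eps s) (hfg : ∀ t, f (coext g t) = eps t)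
    (l : List 𝒜.carrier) (hl : l.length ≤ k) :
    IsPIso 𝒜 ℬ (duplicatorRel (coKleisliStrategy hk hgf hfg) l) := by
  rw [duplicatorRel_eq_playRel hl fun i hi =>
    (coKleisliStrategy_take hk hgf hfg l hl i hi).symm]
  refine ⟨isPHom_playRel hf hIf l hl, ?_⟩
  rw [conv_playRel hgf]
  exact isPHom_playRel hg hIg _ _

def unplay (ψ : List A → A ≃ B) (m : List B) : List A :=
  m.foldl (fun l b => l ++ [(ψ l).symm b]) []

variable (ψ : List A → A ≃ B)

lemma unplay_append_singleton (m : List B) (b : B) :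
    unplay ψ (m ++ [b]) = unplay ψ m ++ [(ψ (unplay ψ m)).symm b] := by
  simp [unplay]

@[simp] lemma length_unplay (m : List B) : (unplay ψ m).length = m.length := by
  induction m using List.reverseRecOn with
  | nil => rfl
  | append_singleton m b ih => simp [unplay_append_singleton, ih]

def strategyMor (s : EkC k A) : B :=
  ψ s.1.dropLast (eps s)

def strategyInvMor (t : EkC k B) : A :=
  (ψ (unplay ψ t.1.dropLast)).symm (eps t)

lemma strategyMor_takeSucc (l : List A) (hl : l.length ≤ k) (i : ℕ) (hi : i < l.length) :
    strategyMor ψ (takeSucc l hl i hi) = ψ (l.take i) l[i] := by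
  change ψ (l.take (i + 1)).dropLast _ = _
  rw [eps_takeSucc, List.dropLast_eq_take, List.take_take, List.length_take]
  rw [show min (min (i + 1) l.length - 1) (i + 1) = i by omega]

lemma strategyMor_snoc (l : List A) (hl : l.length < k) (a : A) :
    strategyMor ψ (snoc l hl a) = ψ l a := by
  change ψ (l ++ [a]).dropLast _ = _
  rw [eps_snoc, List.dropLast_concat]

lemma strategyInvMor_snoc (m : List B) (hm : m.length < k) (b : B) :
    strategyInvMor ψ (snoc m hm b) = (ψ (unplay ψ m)).symm b := by
  change (ψ (unplay ψ (m ++ [b]).dropLast)).symm _ = _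
  rw [eps_snoc, List.dropLast_concat]

lemma coextList_strategyInvMor (m : List B) (hm : m.length ≤ k) :
    coextList (strategyInvMor ψ) m hm = unplay ψ m := by
  induction m using List.reverseRecOn with
  | nil => rfl
  | append_singleton m b ih =>
    simp only [coextList_append_singleton, ih, strategyInvMor_snoc, unplay_append_singleton]

lemma coextList_strategyMor_unplay (m : List B) (hm : m.length ≤ k) :
    coextList (strategyMor ψ) (unplay ψ m) (by simpa) = m := by
  induction m using List.reverseRecOn with
  | nil => rfl
  | append_singleton m b ih =>
    have hm' : m.length ≤ k := by simp at hm; omega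
    simp only [unplay_append_singleton, coextList_append_singleton, ih hm', strategyMor_snoc,
      Equiv.apply_symm_apply]

lemma unplay_coextList_strategyMor (l : List A) (hl : l.length ≤ k) :
    unplay ψ (coextList (strategyMor ψ) l hl) = l := by
  induction l using List.reverseRecOn with
  | nil => rfl
  | append_singleton l a ih =>
    simp only [coextList_append_singleton, unplay_append_singleton, ih, strategyMor_snoc,
      Equiv.symm_apply_apply]

lemma strategyInvMor_coext_strategyMor (s : EkC k A) :
    strategyInvMor ψ (coext (strategyMor ψ) s) = eps s := by
  rw [← eps_coext (strategyInvMor ψ)]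
  congr 1
  apply Subtype.ext
  rw [val_coext, coextList_strategyInvMor, val_coext, unplay_coextList_strategyMor]

lemma strategyMor_coext_strategyInvMor (t : EkC k B) :
    strategyMor ψ (coext (strategyInvMor ψ) t) = eps t := by
  rw [← eps_coext (strategyMor ψ)]
  congr 1
  apply Subtype.ext
  simp only [val_coext, coextList_strategyInvMor, coextList_strategyMor_unplay ψ t.1 t.2.2]

variable {σ : RelVocab} {𝒜 ℬ : RelStruct σ}
  {ψ : List 𝒜.carrier → 𝒜.carrier ≃ ℬ.carrier}

lemma isPHom_playRel_strategyMor
    (hψ : ∀ l, l.length ≤ k → IsPIso 𝒜 ℬ (duplicatorRel ψ l)) (l : List 𝒜.carrier)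
    (hl : l.length ≤ k) : IsPHom 𝒜 ℬ (playRel (strategyMor ψ) l hl) := by
  rw [← duplicatorRel_eq_playRel hl (strategyMor_takeSucc ψ l hl)]
  exact (hψ l hl).1

lemma isPHom_playRel_strategyInvMor
    (hψ : ∀ l, l.length ≤ k → IsPIso 𝒜 ℬ (duplicatorRel ψ l)) (m : List ℬ.carrier)
    (hm : m.length ≤ k) : IsPHom ℬ 𝒜 (playRel (strategyInvMor ψ) m hm) := by
  change IsPHom ℬ 𝒜 (conv (conv (playRel (strategyInvMor ψ) m hm)))
  have hl : (coextList (strategyInvMor ψ) m hm).length ≤ k := by simpa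
  rw [conv_playRel (strategyMor_coext_strategyInvMor ψ),
    ← duplicatorRel_eq_playRel hl (strategyMor_takeSucc ψ _ hl)]
  exact (hψ _ hl).2

end Strategy

theorem stmt7_general (σ : RelVocab) (𝒜 ℬ : RelStruct σ) (k : ℕ) (hk : 1 ≤ k) :
    (∃ (f : EkC k 𝒜.carrier → ℬ.carrier) (g : EkC k ℬ.carrier → 𝒜.carrier),
      IsHom (Ek k 𝒜) ℬ f ∧ IsHom (Ek k ℬ) 𝒜 g ∧ IMor f ∧ IMor g ∧
      (∀ s, g (coext f s) = eps s) ∧ (∀ t, f (coext g t) = eps t)) ↔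
    (∃ ψ : List 𝒜.carrier → 𝒜.carrier ≃ ℬ.carrier,
      ∀ l : List 𝒜.carrier, l.length ≤ k →
        IsPIso 𝒜 ℬ {p | ∃ i : Fin l.length, p = (l.get i, ψ (l.take i) (l.get i))}) := by
  constructor
  · rintro ⟨f, g, hf, hg, hIf, hIg, hgf, hfg⟩
    exact ⟨coKleisliStrategy hk hgf hfg,
      isPIso_duplicatorRel_coKleisliStrategy hk hf hg hIf hIg hgf hfg⟩
  · rintro ⟨ψ, hψ⟩
    have hf := isPHom_playRel_strategyMor hψ
    have hg := isPHom_playRel_strategyInvMor hψ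
    exact ⟨strategyMor ψ, strategyInvMor ψ, isHom_of_isPHom_playRel hf,
      isHom_of_isPHom_playRel hg, iMor_of_isPHom_playRel hf, iMor_of_isPHom_playRel hg,
      strategyInvMor_coext_strategyMor ψ, strategyMor_coext_strategyInvMor ψ⟩

/-- For finite structures, `𝒜 ≅ ℬ` in the coKleisli category of `E_k` via I-morphisms
iff Duplicator has a winning strategy in the `k`-round bijection game. -/
theorem stmt7 (σ : RelVocab) (𝒜 ℬ : RelStruct σ)
    (hA : Finite 𝒜.carrier) (hB : Finite ℬ.carrier) (k : ℕ) (hk : 1 ≤ k) :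
    (∃ (f : EkC k 𝒜.carrier → ℬ.carrier) (g : EkC k ℬ.carrier → 𝒜.carrier),
      IsHom (Ek k 𝒜) ℬ f ∧ IsHom (Ek k ℬ) 𝒜 g ∧ IMor f ∧ IMor g ∧
      (∀ s, g (coext f s) = eps s) ∧ (∀ t, f (coext g t) = eps t)) ↔
    (∃ ψ : List 𝒜.carrier → 𝒜.carrier ≃ ℬ.carrier,
      ∀ l : List 𝒜.carrier, l.length ≤ k →
        IsPIso 𝒜 ℬ {p | ∃ i : Fin l.length, p = (l.get i, ψ (l.take i) (l.get i))}) :=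
  stmt7_general σ 𝒜 ℬ k hk
end

section
/- Let σ be a relational vocabulary and 𝒜 a finite σ-structure. Then the tree-depth of 𝒜 equals the E-coalgebra number of 𝒜; that is, for every k ≥ 1, 𝒜 admits a forest cover of its Gaifman graph of height at most k if and only if there exists an E_k-coalgebra α : 𝒜 → E_k 𝒜, and hence td(𝒜) = κ^E(𝒜), the least k for which an E_k-coalgebra on 𝒜 exists. -/
/-- The adjacency relation of the Gaifman graph of `𝒜`. -/
def gaif {σ : RelVocab} (𝒜 : RelStruct σ) (a a' : 𝒜.carrier) : Prop :=
  a ≠ a' ∧ ∃ (R : σ.Rel) (v : Fin (σ.ar R) → 𝒜.carrier),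
    𝒜.rel R v ∧ (∃ i, v i = a) ∧ (∃ j, v j = a')

/-- A forest cover, with universe `V`, of the graph `(V, adj)`, of height at most `k`:
a partial order on `V` whose predecessor sets are finite chains, in which adjacent
vertices are comparable, and in which every chain has at most `k` elements. -/
structure ForestCoverOn (V : Type) (adj : V → V → Prop) (k : ℕ) where
  le : V → V → Prop
  refl : ∀ a, le a a
  antisymm : ∀ a b, le a b → le b a → a = b
  trans : ∀ a b c, le a b → le b c → le a c
  pred_finite : ∀ a, {b | le b a}.Finite
  pred_chain : ∀ a, IsChain le {b | le b a}
  cover : ∀ a a', adj a a' → le a a' ∨ le a' a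
  height : ∀ C : Finset V, IsChain le ↑C → C.card ≤ k

/-- An `E_k`-coalgebra on `𝒜`: a homomorphism `α : 𝒜 → E_k 𝒜` such that, writing
`α(a) = [a_1,…,a_j]`, one has `a_j = a` and `α(a_i) = [a_1,…,a_i]` for `1 ≤ i ≤ j`. -/
structure EkCoalgebra {σ : RelVocab} (𝒜 : RelStruct σ) (k : ℕ) where
  α : 𝒜.carrier → EkC k 𝒜.carrier
  hom : IsHom 𝒜 (Ek k 𝒜) α
  counit : ∀ a, eps (α a) = a
  comult : ∀ (a : 𝒜.carrier) (i : Fin (α a).1.length),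
    (α ((α a).1.get i)).1 = (α a).1.take (i + 1)


/-!
A forest cover and an `E_k`-coalgebra carry the same information. Given a forest order, send
each vertex to its branch, the chain of its predecessors listed from the root: adjacent vertices
are comparable, so their branches are prefix-comparable, and the branch of a vertex on the
branch of `a` is the corresponding prefix of the branch of `a`. Conversely, the counit makes a
coalgebra `α` injective, so the prefix order pulls back along `α` to a forest order in which
Gaifman-adjacent vertices are comparable because `α` is a homomorphism, and in which a chain
has at most `k` elements because distinct elements of a chain have branches of distinct
lengths in `[1, k]`.
-/

theorem List.eq_take_of_prefix_of_getLast_eq {α : Type*} {l p : List α} (hl : l.Nodup)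
    (hp : p <+: l) (hne : p ≠ []) (i : Fin l.length) (h : p.getLast hne = l.get i) :
    p = l.take (i + 1) := by
  have hpos : 0 < p.length := List.length_pos_iff.2 hne
  have hi : p.length - 1 = i := by
    rw [List.getLast_eq_getElem, hp.getElem, List.get_eq_getElem] at h
    exact hl.getElem_inj_iff.1 h
  rw [List.prefix_iff_eq_take.1 hp]
  congr 1
  omega

namespace ForestCoverOn

variable {V : Type} {adj : V → V → Prop} {k : ℕ} (F : ForestCoverOn V adj k)

noncomputable def depth (a : V) : ℕ :=
  (F.pred_finite a).toFinset.card

def IsParent (m a : V) : Prop :=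
  (F.le m a ∧ m ≠ a) ∧ ∀ b, F.le b a → b ≠ a → F.le b m

variable {F}

lemma depth_lt_depth {a b : V} (hba : F.le b a) (hne : b ≠ a) : F.depth b < F.depth a := by
  apply Finset.card_lt_card
  rw [Finset.ssubset_iff_of_subset]
  · refine ⟨a, ?_, ?_⟩
    · simpa using F.refl a
    · simpa using fun hab => hne (F.antisymm _ _ hba hab)
  · intro c hc
    simp only [Set.Finite.mem_toFinset, Set.mem_ofPred_eq] at hc ⊢
    exact F.trans _ _ _ hc hba

lemma exists_isParent {a : V} (h : ∃ b, F.le b a ∧ b ≠ a) : ∃ m, F.IsParent m a := by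
  classical
  let S := (F.pred_finite a).toFinset.filter (· ≠ a)
  have mem_S : ∀ b, b ∈ S ↔ F.le b a ∧ b ≠ a := by simp [S]
  obtain ⟨b₀, hb₀⟩ := h
  -- a strict predecessor of maximal depth lies above all the others
  obtain ⟨m, hmS, hmax⟩ := S.exists_max_image F.depth ⟨b₀, (mem_S b₀).2 hb₀⟩
  have hm := (mem_S m).1 hmS
  refine ⟨m, hm, fun b hba hne => ?_⟩
  rcases eq_or_ne b m with rfl | hbm
  · exact F.refl b
  rcases F.pred_chain a hba hm.1 hbm with hbm' | hmb
  · exact hbm'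
  · exact absurd (hmax b ((mem_S b).2 ⟨hba, hne⟩)) (depth_lt_depth hmb hbm.symm).not_ge

variable (F)

open Classical in
noncomputable def branch (a : V) : List V :=
  if h : ∃ m, F.IsParent m a then branch h.choose ++ [a] else [a]
termination_by F.depth a
decreasing_by exact depth_lt_depth h.choose_spec.1.1 h.choose_spec.1.2

variable {F}

lemma branch_of_exists_isParent {a : V} (h : ∃ m, F.IsParent m a) :
    F.branch a = F.branch h.choose ++ [a] := by
  rw [branch, dif_pos h]

lemma branch_of_not_exists_isParent {a : V} (h : ¬∃ m, F.IsParent m a) : F.branch a = [a] := by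
  rw [branch, dif_neg h]

lemma exists_branch_eq_append (a : V) : ∃ l, F.branch a = l ++ [a] := by
  by_cases h : ∃ m, F.IsParent m a
  · exact ⟨_, branch_of_exists_isParent h⟩
  · exact ⟨[], branch_of_not_exists_isParent h⟩

lemma branch_ne_nil (a : V) : F.branch a ≠ [] := by
  obtain ⟨l, hl⟩ := exists_branch_eq_append (F := F) a
  simp [hl]

lemma getLast_branch (a : V) : (F.branch a).getLast (branch_ne_nil a) = a := by
  obtain ⟨l, hl⟩ := exists_branch_eq_append (F := F) a
  simp [hl]

lemma le_of_mem_branch {a b : V} (hb : b ∈ F.branch a) : F.le b a := by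
  induction a using branch.induct F with
  | case1 a h ih =>
    rw [branch_of_exists_isParent h, List.mem_append, List.mem_singleton] at hb
    rcases hb with hb | rfl
    · exact F.trans _ _ _ (ih hb) h.choose_spec.1.1
    · exact F.refl b
  | case2 a h =>
    rw [branch_of_not_exists_isParent h, List.mem_singleton] at hb
    exact hb ▸ F.refl b

lemma nodup_branch (a : V) : (F.branch a).Nodup := by
  induction a using branch.induct F with
  | case1 a h ih =>
    rw [branch_of_exists_isParent h]
    refine ih.append (List.nodup_singleton a) fun b hb hba => ?_
    rw [List.mem_singleton] at hba
    subst hba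
    exact h.choose_spec.1.2 (F.antisymm _ _ h.choose_spec.1.1 (le_of_mem_branch hb))
  | case2 a h =>
    rw [branch_of_not_exists_isParent h]
    exact List.nodup_singleton a

lemma branch_prefix_branch {a b : V} (hba : F.le b a) : F.branch b <+: F.branch a := by
  induction a using branch.induct F with
  | case1 a h ih =>
    rcases eq_or_ne b a with rfl | hne
    · exact List.prefix_refl _
    rw [branch_of_exists_isParent h]
    exact (ih (h.choose_spec.2 b hba hne)).trans (List.prefix_append _ _)
  | case2 a h =>
    rcases eq_or_ne b a with rfl | hne
    · exact List.prefix_refl _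
    · exact absurd (exists_isParent ⟨b, hba, hne⟩) h

lemma branch_get (a : V) (i : Fin (F.branch a).length) :
    F.branch ((F.branch a).get i) = (F.branch a).take (i + 1) :=
  List.eq_take_of_prefix_of_getLast_eq (nodup_branch a)
    (branch_prefix_branch (le_of_mem_branch (List.get_mem _ i))) (branch_ne_nil _) i
    (getLast_branch _)

lemma length_branch_le (a : V) : (F.branch a).length ≤ k := by
  classical
  have hchain : IsChain F.le ↑(F.branch a).toFinset := by
    intro x hx y hy hxy
    simp only [List.coe_toFinset, Set.mem_ofPred_eq] at hx hy
    exact F.pred_chain a (le_of_mem_branch hx) (le_of_mem_branch hy) hxy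
  simpa [List.toFinset_card_of_nodup (nodup_branch a)] using F.height _ hchain

lemma cmp_branch {a b : V} (h : F.le a b ∨ F.le b a) : Cmp (F.branch a) (F.branch b) :=
  h.imp branch_prefix_branch branch_prefix_branch

variable (F) in
noncomputable def branchSeq (a : V) : EkC k V :=
  ⟨F.branch a, branch_ne_nil a, length_branch_le a⟩

lemma eps_branchSeq (a : V) : eps (F.branchSeq a) = a :=
  getLast_branch a

lemma isHom_branchSeq {σ : RelVocab} {𝒜 : RelStruct σ} (F : ForestCoverOn 𝒜.carrier (gaif 𝒜) k) :
    IsHom 𝒜 (Ek k 𝒜) F.branchSeq := by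
  intro R v hv
  refine ⟨fun i j => cmp_branch ?_, by simpa only [eps_branchSeq] using hv⟩
  rcases eq_or_ne (v i) (v j) with heq | hne
  · exact Or.inl (heq ▸ F.refl _)
  · exact F.cover _ _ ⟨hne, R, v, hv, ⟨i, rfl⟩, ⟨j, rfl⟩⟩

noncomputable def toEkCoalgebra {σ : RelVocab} {𝒜 : RelStruct σ} (F : ForestCoverOn 𝒜.carrier (gaif 𝒜) k) :
    EkCoalgebra 𝒜 k where
  α := F.branchSeq
  hom := isHom_branchSeq F
  counit := eps_branchSeq
  comult := branch_get

end ForestCoverOn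

namespace EkCoalgebra

variable {σ : RelVocab} {𝒜 : RelStruct σ} {k : ℕ} (c : EkCoalgebra 𝒜 k)

lemma injective : Function.Injective fun a => (c.α a).1 := by
  intro a b h
  rw [← c.counit a, ← c.counit b]
  exact List.getLast_congr _ _ h

lemma cmp_of_gaif {a b : 𝒜.carrier} (h : gaif 𝒜 a b) : Cmp (c.α a).1 (c.α b).1 := by
  obtain ⟨-, R, v, hv, ⟨i, rfl⟩, ⟨j, rfl⟩⟩ := h
  exact (c.hom R v hv).1 i j

lemma card_le_of_isChain (C : Finset 𝒜.carrier)
    (hC : IsChain (fun a b => (c.α a).1 <+: (c.α b).1) ↑C) : C.card ≤ k := by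
  have hinj : Set.InjOn (fun a => (c.α a).1.length) ↑C := by
    intro a ha b hb hlen
    by_contra hne
    rcases hC ha hb hne with h | h
    · exact hne (c.injective (h.eq_of_length hlen))
    · exact hne (c.injective (h.eq_of_length hlen.symm)).symm
  have hmaps : ∀ a ∈ C, (c.α a).1.length ∈ Finset.Icc 1 k := fun a _ =>
    Finset.mem_Icc.2 ⟨List.length_pos_iff.2 (c.α a).2.1, (c.α a).2.2⟩
  simpa using Finset.card_le_card_of_injOn _ hmaps hinj

def toForestCoverOn : ForestCoverOn 𝒜.carrier (gaif 𝒜) k where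
  le a b := (c.α a).1 <+: (c.α b).1
  refl _ := List.prefix_refl _
  antisymm a b hab hba := c.injective (hab.eq_of_length (le_antisymm hab.length_le hba.length_le))
  trans _ _ _ := List.IsPrefix.trans
  pred_finite a := by
    simpa only [Set.preimage_ofPred_eq, List.mem_inits] using
      (c.α a).1.inits.finite_toSet.preimage c.injective.injOn
  pred_chain _ _ hx _ hy _ := List.prefix_or_prefix_of_prefix hx hy
  cover _ _ := c.cmp_of_gaif
  height := c.card_le_of_isChain

end EkCoalgebra

theorem nonempty_forestCoverOn_gaif_iff {σ : RelVocab} (𝒜 : RelStruct σ) (k : ℕ) :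
    Nonempty (ForestCoverOn 𝒜.carrier (gaif 𝒜) k) ↔ Nonempty (EkCoalgebra 𝒜 k) :=
  ⟨fun ⟨F⟩ => ⟨F.toEkCoalgebra⟩, fun ⟨c⟩ => ⟨c.toForestCoverOn⟩⟩

theorem stmt10_general (σ : RelVocab) (𝒜 : RelStruct σ) :
    (∀ k : ℕ, 1 ≤ k →
      (Nonempty (ForestCoverOn 𝒜.carrier (gaif 𝒜) k) ↔ Nonempty (EkCoalgebra 𝒜 k))) ∧
    sInf {k : ℕ | 1 ≤ k ∧ Nonempty (ForestCoverOn 𝒜.carrier (gaif 𝒜) k)} =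
      sInf {k : ℕ | 1 ≤ k ∧ Nonempty (EkCoalgebra 𝒜 k)} := by
  refine ⟨fun k _ => nonempty_forestCoverOn_gaif_iff 𝒜 k, ?_⟩
  simp_rw [nonempty_forestCoverOn_gaif_iff]

/-- The tree-depth of a finite structure equals its `E`-coalgebra number: for every
`k ≥ 1` there is a forest cover of the Gaifman graph of height `≤ k` iff there is an
`E_k`-coalgebra on `𝒜`; hence the least such `k`s coincide. -/
theorem stmt10 (σ : RelVocab) (𝒜 : RelStruct σ) (hfin : Finite 𝒜.carrier) :
    (∀ k : ℕ, 1 ≤ k →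
      (Nonempty (ForestCoverOn 𝒜.carrier (gaif 𝒜) k) ↔ Nonempty (EkCoalgebra 𝒜 k))) ∧
    sInf {k : ℕ | 1 ≤ k ∧ Nonempty (ForestCoverOn 𝒜.carrier (gaif 𝒜) k)} =
      sInf {k : ℕ | 1 ≤ k ∧ Nonempty (EkCoalgebra 𝒜 k)} :=
  stmt10_general σ 𝒜
end

section
/- Let σ be a relational vocabulary and 𝒜 a finite σ-structure. Then tw(𝒜) = κ^P(𝒜) − 1; that is, for every k ≥ 1, the Gaifman graph of 𝒜 has a tree decomposition of width at most k − 1 if and only if there exists a P_k-coalgebra α : 𝒜 → P_k 𝒜. -/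
/-- Nonempty sequences of (pebble index, element) pairs: the universe of `P_k 𝒜`. -/
def PkC (k : ℕ) (A : Type) : Type :=
  {l : List (Fin k × A) // l ≠ []}

/-- The last move of a play. -/
def plast {k : ℕ} {A : Type} (s : PkC k A) : Fin k × A :=
  s.1.getLast s.2

/-- The counit: the element of the last move. -/
def peps {k : ℕ} {A : Type} (s : PkC k A) : A :=
  (plast s).2

/-- The pebbling comonad `P_k` on structures. -/
def Pk {σ : RelVocab} (k : ℕ) (𝒜 : RelStruct σ) : RelStruct σ where
  carrier := PkC k 𝒜.carrier
  rel R v :=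
    (∀ i j, Cmp (v i).1 (v j).1) ∧
    (∀ i j (u : List (Fin k × 𝒜.carrier)), (v j).1 = (v i).1 ++ u →
      (plast (v i)).1 ∉ u.map Prod.fst) ∧
    𝒜.rel R (fun i => peps (v i))

/-- The prefix of `s` of length `i+1`. -/
def pPrefAt {k : ℕ} {A : Type} (s : PkC k A) (i : Fin s.1.length) : PkC k A :=
  ⟨s.1.take (i + 1), by
    apply List.ne_nil_of_length_pos
    rw [List.length_take]
    exact lt_min (Nat.succ_pos _) (Nat.lt_of_le_of_lt (Nat.zero_le _) i.2)⟩

/-- The Kleisli coextension for the pebbling comonad. -/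
def pcoext {k : ℕ} {A B : Type} (f : PkC k A → B) (s : PkC k A) : PkC k B :=
  ⟨List.ofFn (fun i : Fin s.1.length => ((s.1.get i).1, f (pPrefAt s i))), by
    apply List.ne_nil_of_length_pos
    rw [List.length_ofFn]
    exact List.length_pos_iff.mpr s.2⟩

/-- A `P_k`-coalgebra on `𝒜`: a homomorphism `α : 𝒜 → P_k 𝒜` such that, writing
`α(a) = [(p_1,a_1),…,(p_j,a_j)]`, one has `a_j = a` and
`α(a_i) = [(p_1,a_1),…,(p_i,a_i)]` for `1 ≤ i ≤ j`. -/
structure PkCoalgebra {σ : RelVocab} (𝒜 : RelStruct σ) (k : ℕ) where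
  α : 𝒜.carrier → PkC k 𝒜.carrier
  hom : IsHom 𝒜 (Pk k 𝒜) α
  counit : ∀ a, peps (α a) = a
  comult : ∀ (a : 𝒜.carrier) (i : Fin (α a).1.length),
    (α ((α a).1.get i).2).1 = (α a).1.take (i + 1)

/-- A tree decomposition of the graph `(V, adj)`: a tree order `(T, le)` (a partial
order with predecessor sets finite chains and a least element), which therefore has
binary meets, together with a labelling `lam : T → Set V` satisfying (TD1)–(TD3). -/
structure TreeDecomp (V : Type) (adj : V → V → Prop) where
  T : Type
  le : T → T → Prop
  refl : ∀ x, le x x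
  antisymm : ∀ x y, le x y → le y x → x = y
  trans : ∀ x y z, le x y → le y z → le x z
  pred_finite : ∀ x, {y | le y x}.Finite
  pred_chain : ∀ x, IsChain le {y | le y x}
  bot : T
  bot_le : ∀ x, le bot x
  meet : T → T → T
  meet_le_left : ∀ x y, le (meet x y) x
  meet_le_right : ∀ x y, le (meet x y) y
  le_meet : ∀ x y z, le z x → le z y → le z (meet x y)
  lam : T → Set V
  td1 : ∀ v, ∃ x, v ∈ lam x
  td2 : ∀ v v', adj v v' → ∃ x, v ∈ lam x ∧ v' ∈ lam x
  td3 : ∀ v x x' y, v ∈ lam x → v ∈ lam x' →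
    ((le (meet x x') y ∧ le y x) ∨ (le (meet x x') y ∧ le y x')) → v ∈ lam y

/-- A `k`-pebble forest cover of the graph `(V, adj)`: a forest order on `V` in which
adjacent vertices are comparable, together with a pebbling function `p : V → {1,…,k}`
such that if `v ⌢ v'` and `v ≤ v'`, then `p(v) ≠ p(w)` for all `w` with `v < w ≤ v'`. -/
structure PebbleForestCover (V : Type) (adj : V → V → Prop) (k : ℕ) where
  le : V → V → Prop
  refl : ∀ a, le a a
  antisymm : ∀ a b, le a b → le b a → a = b
  trans : ∀ a b c, le a b → le b c → le a c
  pred_finite : ∀ a, {b | le b a}.Finite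
  pred_chain : ∀ a, IsChain le {b | le b a}
  cover : ∀ a a', adj a a' → le a a' ∨ le a' a
  peb : V → Fin k
  peb_cond : ∀ v v' w, adj v v' → le v v' → le v w → v ≠ w → le w v' → peb v ≠ peb w

/-!
Given a `P_k`-coalgebra `α`, put at each play `l` the bag of those `a` for which `α a` is a prefix
of `l` whose last pebble is not moved again in `l`. Over the prefix tree of plays these bags form a
tree decomposition (the homomorphism condition puts related elements into a common bag), and a
bag has at most `k` elements since its elements carry distinct pebbles. Conversely, given a tree
decomposition with bags of size at most `k`, order the vertices by the least bag containing them
(a forest order in which adjacent vertices are comparable), assign pebbles greedily along this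
order so that each vertex avoids the pebbles of the earlier vertices of its least bag, and let
`α a` be the pebbled path from a root to `a`.
-/

namespace List

variable {α : Type*} [DecidableEq α]

def longestCommonPrefix : List α → List α → List α
  | a :: l, b :: l' => if a = b then a :: longestCommonPrefix l l' else []
  | _, _ => []

theorem longestCommonPrefix_comm (l l' : List α) :
    longestCommonPrefix l l' = longestCommonPrefix l' l := by
  induction l generalizing l' with
  | nil => cases l' <;> rfl
  | cons a l ih =>
    cases l' with
    | nil => rfl
    | cons b l' => by_cases h : a = b <;> simp [longestCommonPrefix, h, ih, eq_comm]

theorem longestCommonPrefix_prefix_left (l l' : List α) : longestCommonPrefix l l' <+: l := by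
  induction l generalizing l' with
  | nil => cases l' <;> exact nil_prefix
  | cons a l ih =>
    cases l' with
    | nil => exact nil_prefix
    | cons b l' =>
      by_cases h : a = b
      · simpa [longestCommonPrefix, h] using ih l'
      · simp [longestCommonPrefix, h]

theorem longestCommonPrefix_prefix_right (l l' : List α) : longestCommonPrefix l l' <+: l' :=
  longestCommonPrefix_comm l l' ▸ longestCommonPrefix_prefix_left l' l

theorem prefix_longestCommonPrefix {s l l' : List α} (hl : s <+: l) (hl' : s <+: l') :
    s <+: longestCommonPrefix l l' := by
  induction s generalizing l l' with
  | nil => exact nil_prefix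
  | cons a s ih =>
    obtain ⟨t, rfl, ht⟩ := cons_prefix_iff.mp hl
    obtain ⟨t', rfl, ht'⟩ := cons_prefix_iff.mp hl'
    simpa [longestCommonPrefix] using ih ht ht'

end List

def TreeDecomp.ofPrefix {V α : Type} [DecidableEq α] {adj : V → V → Prop}
    (lam : List α → Set V) (td1 : ∀ v, ∃ l, v ∈ lam l)
    (td2 : ∀ v v', adj v v' → ∃ l, v ∈ lam l ∧ v' ∈ lam l)
    (td3 : ∀ v l l' y, v ∈ lam l → v ∈ lam l' →
      List.longestCommonPrefix l l' <+: y → y <+: l → v ∈ lam y) :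
    TreeDecomp V adj where
  T := List α
  le := (· <+: ·)
  refl := List.prefix_refl
  antisymm _ _ h h' := h.eq_of_length_le h'.length_le
  trans _ _ _ := List.IsPrefix.trans
  pred_finite x := x.inits.finite_toSet.subset fun y hy => (List.mem_inits y x).mpr hy
  pred_chain _ _ hy _ hz _ := List.prefix_or_prefix_of_prefix hy hz
  bot := []
  bot_le _ := List.nil_prefix
  meet := List.longestCommonPrefix
  meet_le_left := List.longestCommonPrefix_prefix_left
  meet_le_right := List.longestCommonPrefix_prefix_right
  le_meet _ _ _ := List.prefix_longestCommonPrefix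
  lam := lam
  td1 := td1
  td2 := td2
  td3 v l l' y hl hl' := by
    rintro (⟨hmeet, hy⟩ | ⟨hmeet, hy⟩)
    · exact td3 v l l' y hl hl' hmeet hy
    · exact td3 v l' l y hl' hl (List.longestCommonPrefix_comm l l' ▸ hmeet) hy

namespace PkC

variable {k : ℕ} {A : Type}

/-- The pebble placed by the last move of `s` is still on its element after the play `l`. -/
def StillPlaced (s : PkC k A) (l : List (Fin k × A)) : Prop :=
  ∃ u, l = s.1 ++ u ∧ (plast s).1 ∉ u.map Prod.fst

theorem stillPlaced_self (s : PkC k A) : s.StillPlaced s.1 :=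
  ⟨[], by simp, by simp⟩

theorem StillPlaced.prefix {s : PkC k A} {l : List (Fin k × A)} (h : s.StillPlaced l) :
    s.1 <+: l :=
  let ⟨u, hu, _⟩ := h; ⟨u, hu.symm⟩

theorem StillPlaced.of_prefix {s : PkC k A} {l y : List (Fin k × A)} (h : s.StillPlaced l)
    (hs : s.1 <+: y) (hy : y <+: l) : s.StillPlaced y := by
  obtain ⟨u, rfl, hu⟩ := h
  obtain ⟨w, rfl⟩ := hs
  have hwu : w <+: u := (List.prefix_append_right_inj _).mp hy
  exact ⟨w, rfl, fun hw => hu ((hwu.sublist.map _).mem hw)⟩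

theorem StillPlaced.eq_of_prefix {s t : PkC k A} {l : List (Fin k × A)} (hs : s.StillPlaced l)
    (hst : s.1 <+: t.1) (ht : t.1 <+: l) (hpeb : (plast s).1 = (plast t).1) : s = t := by
  obtain ⟨u, rfl, hu⟩ := hs
  obtain ⟨t, htne⟩ := t
  obtain ⟨w, rfl⟩ := hst
  rcases eq_or_ne w [] with rfl | hw
  · exact Subtype.ext (List.append_nil _).symm
  · -- the last move of `t` lies in `w`, so it moves the pebble of `s` again
    have hlast : plast ⟨s.1 ++ w, htne⟩ ∈ w := by
      simpa only [plast, List.getLast_append_of_ne_nil _ hw] using List.getLast_mem hw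
    have hwu : w <+: u := (List.prefix_append_right_inj _).mp ht
    exact absurd ((hwu.sublist.map _).mem (List.mem_map_of_mem hlast)) (hpeb ▸ hu)

theorem StillPlaced.eq_of_plast_fst_eq {s t : PkC k A} {l : List (Fin k × A)}
    (hs : s.StillPlaced l) (ht : t.StillPlaced l) (hpeb : (plast s).1 = (plast t).1) : s = t := by
  rcases List.prefix_or_prefix_of_prefix hs.prefix ht.prefix with hst | hts
  · exact hs.eq_of_prefix hst ht.prefix hpeb
  · exact (ht.eq_of_prefix hts hs.prefix hpeb.symm).symm

end PkC

theorem Pk.stillPlaced_of_rel {σ : RelVocab} {𝒜 : RelStruct σ} {k : ℕ} {R : σ.Rel}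
    {w : Fin (σ.ar R) → PkC k 𝒜.carrier} (h : (Pk k 𝒜).rel R w) {i j : Fin (σ.ar R)}
    (hij : (w i).1 <+: (w j).1) : (w i).StillPlaced (w j).1 :=
  let ⟨u, hu⟩ := hij; ⟨u, hu.symm, h.2.1 i j u hu.symm⟩

namespace PkCoalgebra

variable {σ : RelVocab} {𝒜 : RelStruct σ} {k : ℕ} (G : PkCoalgebra 𝒜 k)

theorem exists_stillPlaced_of_gaif {v v' : 𝒜.carrier} (h : gaif 𝒜 v v') :
    ∃ l, (G.α v).StillPlaced l ∧ (G.α v').StillPlaced l := by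
  obtain ⟨-, R, w, hw, ⟨i, rfl⟩, ⟨j, rfl⟩⟩ := h
  have hrel := G.hom R w hw
  rcases hrel.1 i j with hij | hji
  · exact ⟨_, Pk.stillPlaced_of_rel hrel hij, PkC.stillPlaced_self _⟩
  · exact ⟨_, PkC.stillPlaced_self _, Pk.stillPlaced_of_rel hrel hji⟩

def treeDecomp [DecidableEq 𝒜.carrier] : TreeDecomp 𝒜.carrier (gaif 𝒜) :=
  TreeDecomp.ofPrefix (fun l => {v | (G.α v).StillPlaced l})
    (fun _ => ⟨_, PkC.stillPlaced_self _⟩)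
    (fun _ _ h => G.exists_stillPlaced_of_gaif h)
    (fun _ _ _ _ hl hl' hmeet hy =>
      hl.of_prefix ((List.prefix_longestCommonPrefix hl.prefix hl'.prefix).trans hmeet) hy)

theorem injOn_treeDecomp_lam [DecidableEq 𝒜.carrier] (l : G.treeDecomp.T) :
    Set.InjOn (fun v => (plast (G.α v)).1) (G.treeDecomp.lam l) := fun v hv v' hv' h => by
  rw [← G.counit v, ← G.counit v', PkC.StillPlaced.eq_of_plast_fst_eq hv hv' h]

theorem treeDecomp_lam_finite [DecidableEq 𝒜.carrier] (l : G.treeDecomp.T) :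
    (G.treeDecomp.lam l).Finite :=
  .of_finite_image (Set.toFinite _) (G.injOn_treeDecomp_lam l)

theorem ncard_treeDecomp_lam_le [DecidableEq 𝒜.carrier] (l : G.treeDecomp.T) :
    (G.treeDecomp.lam l).ncard ≤ k := by
  simpa using Set.ncard_le_ncard_of_injOn _ (fun _ _ => Set.mem_univ _) (G.injOn_treeDecomp_lam l)

end PkCoalgebra

def IsForestOrder (V : Type*) [PartialOrder V] : Prop :=
  ∀ a : V, IsChain (· ≤ ·) (Set.Iic a)

section RootPath

variable {V : Type*} [PartialOrder V]

open Classical in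
/-- In a forest order, the chain of elements below `a`, listed upwards from a root to `a`. -/
noncomputable def rootPath [Finite V] (a : V) : List V :=
  if h : ∃ p < a, ∀ b < a, b ≤ p then rootPath h.choose ++ [a] else [a]
termination_by (Set.Iio a).ncard
decreasing_by exact Set.ncard_lt_ncard (Set.Iio_ssubset_Iio h.choose_spec.1) (Set.toFinite _)

theorem rootPath_of_isGreatest [Finite V] {a p : V} (hpa : p < a) (hp : ∀ b < a, b ≤ p) :
    rootPath a = rootPath p ++ [a] := by
  have h : ∃ p < a, ∀ b < a, b ≤ p := ⟨p, hpa, hp⟩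
  rw [rootPath, dif_pos h, le_antisymm (hp _ h.choose_spec.1) (h.choose_spec.2 p hpa)]

theorem exists_rootPath_eq_append [Finite V] (a : V) : ∃ l, rootPath a = l ++ [a] := by
  rw [rootPath]
  split_ifs
  exacts [⟨_, rfl⟩, ⟨[], rfl⟩]

theorem rootPath_ne_nil [Finite V] (a : V) : rootPath a ≠ [] := by
  obtain ⟨l, hl⟩ := exists_rootPath_eq_append a
  simp [hl]

theorem getLast_rootPath [Finite V] (a : V) : (rootPath a).getLast (rootPath_ne_nil a) = a := by
  obtain ⟨l, hl⟩ := exists_rootPath_eq_append a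
  simp [hl]

theorem mem_rootPath_self [Finite V] (a : V) : a ∈ rootPath a := by
  obtain ⟨l, hl⟩ := exists_rootPath_eq_append a
  simp [hl]

theorem le_of_mem_rootPath [Finite V] {a b : V} (hb : b ∈ rootPath a) : b ≤ a := by
  induction a using WellFoundedLT.induction with
  | _ a ih =>
    rw [rootPath] at hb
    split_ifs at hb with h
    · rcases List.mem_append.mp hb with hb | hb
      · exact (ih _ h.choose_spec.1 hb).trans h.choose_spec.1.le
      · exact (List.mem_singleton.mp hb).le
    · exact (List.mem_singleton.mp hb).le

theorem nodup_rootPath [Finite V] (a : V) : (rootPath a).Nodup := by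
  induction a using WellFoundedLT.induction with
  | _ a ih =>
    rw [rootPath]
    split_ifs with h
    · refine List.nodup_append.mpr ⟨ih _ h.choose_spec.1, List.nodup_singleton a, ?_⟩
      intro b hb c hc
      rw [List.mem_singleton.mp hc]
      exact ((le_of_mem_rootPath hb).trans_lt h.choose_spec.1).ne
    · exact List.nodup_singleton a

theorem exists_isGreatest_Iio [Finite V] (hV : IsForestOrder V) {a : V} (h : ∃ b, b < a) :
    ∃ p < a, ∀ b < a, b ≤ p := by
  obtain ⟨p, hp⟩ := (Set.toFinite (Set.Iio a)).exists_maximal h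
  refine ⟨p, hp.1, fun b hb => ?_⟩
  exact ((hV a).total hb.le hp.1.le).elim id (hp.2 hb)

theorem rootPath_prefix_of_le [Finite V] (hV : IsForestOrder V) {a b : V} (hba : b ≤ a) :
    rootPath b <+: rootPath a := by
  induction a using WellFoundedLT.induction with
  | _ a ih =>
    obtain rfl | hba := hba.eq_or_lt
    · exact List.prefix_refl _
    obtain ⟨p, hpa, hp⟩ := exists_isGreatest_Iio hV ⟨b, hba⟩
    rw [rootPath_of_isGreatest hpa hp]
    exact (ih p hpa (hp b hba)).trans (List.prefix_append _ _)

theorem mem_rootPath_iff [Finite V] (hV : IsForestOrder V) {a b : V} : b ∈ rootPath a ↔ b ≤ a :=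
  ⟨le_of_mem_rootPath, fun hba => (rootPath_prefix_of_le hV hba).subset (mem_rootPath_self b)⟩

theorem rootPath_getElem [Finite V] (hV : IsForestOrder V) {a : V} (i : ℕ)
    (hi : i < (rootPath a).length) :
    rootPath (rootPath a)[i] = (rootPath a).take (i + 1) := by
  set b := (rootPath a)[i]
  have hpre : rootPath b <+: rootPath a :=
    rootPath_prefix_of_le hV (le_of_mem_rootPath (List.getElem_mem hi))
  suffices hlen : (rootPath b).length = i + 1 by
    rw [← hlen]; exact List.prefix_iff_eq_take.mp hpre
  -- `b` is the last entry of `rootPath b`, so it also sits at position `length - 1` of the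
  -- duplicate-free list `rootPath a`
  have hpos := List.length_pos_iff.mpr (rootPath_ne_nil b)
  have hlast : (rootPath a)[(rootPath b).length - 1]'(by have := hpre.length_le; omega) = b := by
    rw [← hpre.getElem (by omega), ← List.getLast_eq_getElem (rootPath_ne_nil b), getLast_rootPath]
  have := ((nodup_rootPath a).getElem_inj_iff).mp hlast
  omega

end RootPath

section PebbledPath

variable {V : Type} [PartialOrder V] [Finite V] {k : ℕ}

noncomputable def pebbledPath (peb : V → Fin k) (a : V) : PkC k V :=
  ⟨(rootPath a).map fun b => (peb b, b), by simpa using rootPath_ne_nil a⟩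

theorem plast_pebbledPath (peb : V → Fin k) (a : V) : plast (pebbledPath peb a) = (peb a, a) := by
  simp [plast, pebbledPath, List.getLast_map, getLast_rootPath]

theorem peps_pebbledPath (peb : V → Fin k) (a : V) : peps (pebbledPath peb a) = a := by
  simp [peps, plast_pebbledPath]

theorem pebbledPath_get (hV : IsForestOrder V) (peb : V → Fin k)
    (a : V) (i : Fin (pebbledPath peb a).1.length) :
    (pebbledPath peb ((pebbledPath peb a).1.get i).2).1 = (pebbledPath peb a).1.take (i + 1) := by
  obtain ⟨i, hi⟩ := i
  have hi' : i < (rootPath a).length := by simpa [pebbledPath] using hi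
  simp only [pebbledPath, List.get_eq_getElem, List.getElem_map, rootPath_getElem hV i hi',
    List.map_take]

theorem pebbledPath_prefix_of_le (hV : IsForestOrder V)
    (peb : V → Fin k) {a b : V} (hab : a ≤ b) : (pebbledPath peb a).1 <+: (pebbledPath peb b).1 :=
  (rootPath_prefix_of_le hV hab).map _

theorem lt_of_mem_pebbledPath_eq_append (hV : IsForestOrder V)
    (peb : V → Fin k) {a b : V} {u : List (Fin k × V)}
    (h : (pebbledPath peb b).1 = (pebbledPath peb a).1 ++ u) {x : Fin k × V} (hx : x ∈ u) :
    a < x.2 ∧ x.2 ≤ b ∧ x.1 = peb x.2 := by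
  obtain ⟨l, l', hb, hl, rfl⟩ := List.map_eq_append_iff.mp h
  have hinj : Function.Injective fun c : V => (peb c, c) := fun _ _ h => congrArg Prod.snd h
  obtain rfl : l = rootPath a := List.map_injective_iff.mpr hinj hl
  obtain ⟨y, hy, rfl⟩ := List.mem_map.mp hx
  have hyb : y ≤ b := le_of_mem_rootPath (hb ▸ List.mem_append_right _ hy)
  have hab : a ≤ b := le_of_mem_rootPath (hb ▸ List.mem_append_left _ (mem_rootPath_self a))
  have hya : ¬ y ≤ a := fun hya =>
    (List.nodup_append.mp (hb ▸ nodup_rootPath b)).2.2 y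
      ((mem_rootPath_iff hV).mpr hya) y hy rfl
  exact ⟨lt_of_le_not_ge (((hV b).total hab hyb).resolve_right hya) hya, hyb, rfl⟩

theorem isHom_pebbledPath {σ : RelVocab} {𝒜 : RelStruct σ} [PartialOrder 𝒜.carrier]
    [Finite 𝒜.carrier] (hV : IsForestOrder 𝒜.carrier) {k : ℕ}
    (peb : 𝒜.carrier → Fin k) (hcover : ∀ a a', gaif 𝒜 a a' → a ≤ a' ∨ a' ≤ a)
    (hpeb : ∀ v v' w, gaif 𝒜 v v' → v < w → w ≤ v' → peb v ≠ peb w) :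
    IsHom 𝒜 (Pk k 𝒜) (pebbledPath peb) := by
  intro R w hw
  have hgaif : ∀ i j, w i ≠ w j → gaif 𝒜 (w i) (w j) :=
    fun i j h => ⟨h, R, w, hw, ⟨i, rfl⟩, ⟨j, rfl⟩⟩
  refine ⟨fun i j => ?_, fun i j u hu hmem => ?_, by simpa only [peps_pebbledPath] using hw⟩
  · obtain h | h := eq_or_ne (w i) (w j)
    · exact Or.inl (pebbledPath_prefix_of_le hV peb h.le)
    · exact (hcover _ _ (hgaif i j h)).imp (pebbledPath_prefix_of_le hV peb)
        (pebbledPath_prefix_of_le hV peb)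
  · obtain ⟨x, hx, hxi⟩ := List.mem_map.mp hmem
    obtain ⟨hlt, hle, hx⟩ := lt_of_mem_pebbledPath_eq_append hV peb hu hx
    rw [plast_pebbledPath] at hxi
    exact hpeb _ _ _ (hgaif i j (hlt.trans_le hle).ne) hlt hle (hxi.symm.trans hx)

namespace PebbleForestCover

abbrev toPartialOrder {V : Type} {adj : V → V → Prop} {k : ℕ} (C : PebbleForestCover V adj k) :
    PartialOrder V where
  le := C.le
  le_refl := C.refl
  le_trans := C.trans
  le_antisymm := C.antisymm

noncomputable def toPkCoalgebra {σ : RelVocab} {𝒜 : RelStruct σ} [Finite 𝒜.carrier] {k : ℕ}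
    (C : PebbleForestCover 𝒜.carrier (gaif 𝒜) k) : PkCoalgebra 𝒜 k :=
  letI := C.toPartialOrder
  { α := pebbledPath C.peb
    hom := isHom_pebbledPath C.pred_chain C.peb C.cover fun v v' w h hvw hwv' =>
      C.peb_cond v v' w h (hvw.le.trans hwv') hvw.le hvw.ne hwv'
    counit := peps_pebbledPath C.peb
    comult := pebbledPath_get C.pred_chain C.peb }

end PebbleForestCover

theorem exists_fin_coloring_of_wellFounded {V : Type*} {r : V → V → Prop} (hr : WellFounded r)
    {k : ℕ} (N : V → Set V) (hN : ∀ b, (N b).Finite ∧ (N b).ncard < k) :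
    ∃ c : V → Fin k, ∀ a b, r a b → a ∈ N b → c a ≠ c b := by
  have hfree : ∀ b (c : {a // a ∈ N b ∧ r a b} → Fin k), ∃ x, ∀ a, c a ≠ x := by
    intro b c
    by_contra! hsurj
    have : Finite {a // a ∈ N b ∧ r a b} := ((hN b).1.subset fun _ ha => ha.1).to_subtype
    have hcard := Nat.card_le_card_of_surjective c hsurj
    rw [Nat.card_fin] at hcard
    exact (hcard.trans ((Nat.card_coe_set_eq {a | a ∈ N b ∧ r a b}).trans_le
      (Set.ncard_le_ncard (fun _ ha => ha.1) (hN b).1))).not_gt (hN b).2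
  choose free hfree using hfree
  -- greedy colouring along `r`: `b` avoids the colours of the `r`-smaller members of `N b`
  let c : V → Fin k := hr.fix fun b ih => free b fun a => ih a.1 a.2.2
  refine ⟨c, fun a b hab ha => ?_⟩
  have hc : c b = free b fun a => c a.1 := hr.fix_eq _ b
  exact hc ▸ hfree b (fun a => c a.1) ⟨a, ha, hab⟩

namespace TreeDecomp

variable {V : Type} {adj : V → V → Prop} (D : TreeDecomp V adj)

abbrev toPartialOrder : PartialOrder D.T where
  le := D.le
  le_refl := D.refl
  le_trans := D.trans
  le_antisymm := D.antisymm

theorem mem_lam_of_le {v : V} {x y z : D.T} (hx : v ∈ D.lam x) (hz : v ∈ D.lam z)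
    (hxy : D.le x y) (hyz : D.le y z) : v ∈ D.lam y := by
  have hmeet : D.meet x z = x :=
    D.antisymm _ _ (D.meet_le_left x z) (D.le_meet x z x (D.refl x) (D.trans _ _ _ hxy hyz))
  exact D.td3 v x z y hx hz (Or.inr ⟨by rwa [hmeet], hyz⟩)

theorem exists_least_mem_lam (v : V) : ∃ x, v ∈ D.lam x ∧ ∀ z, v ∈ D.lam z → D.le x z := by
  let := D.toPartialOrder
  obtain ⟨x₀, hx₀⟩ := D.td1 v
  obtain ⟨m, ⟨hmx₀, hm⟩, hmin⟩ :=
    ((D.pred_finite x₀).inter_of_left {y | v ∈ D.lam y}).exists_minimal ⟨x₀, D.refl x₀, hx₀⟩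
  refine ⟨m, hm, fun z hz => ?_⟩
  -- the meet of `m` and `z` still holds `v` by (TD3), so it is `m` by minimality
  have hw : v ∈ D.lam (D.meet m z) :=
    D.td3 v m z _ hm hz (Or.inl ⟨D.refl _, D.meet_le_left m z⟩)
  have hmw := hmin ⟨D.trans _ _ _ (D.meet_le_left m z) hmx₀, hw⟩ (D.meet_le_left m z)
  exact D.trans _ _ _ hmw (D.meet_le_right m z)

theorem nonempty_pebbleForestCover [Finite V] {k : ℕ} (hD : ∀ x, (D.lam x).ncard ≤ k) :
    Nonempty (PebbleForestCover V adj k) := by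
  let := D.toPartialOrder
  choose t ht hmin using D.exists_least_mem_lam
  obtain ⟨n, ⟨e⟩⟩ := Finite.exists_equiv_fin V
  -- order `V` by least bags, breaking ties by an enumeration of `V`
  let : PartialOrder V := PartialOrder.lift (fun a => toLex (t a, e a))
    fun a b h => e.injective (congrArg (fun p => (ofLex p).2) h)
  have hmono : ∀ a b : V, a ≤ b → D.le (t a) (t b) := fun a b h => Prod.Lex.monotone_fst _ _ h
  have hlex : ∀ a b : V, t a < t b ∨ t a = t b ∧ e a ≤ e b → a ≤ b := fun a b =>
    (Prod.Lex.le_iff (x := toLex (t a, e a)) (y := toLex (t b, e b))).mpr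
  have htotal : ∀ (a b : V) (x : D.T), D.le (t a) x → D.le (t b) x → a ≤ b ∨ b ≤ a := by
    intro a b x ha hb
    obtain h | h := eq_or_ne (t a) (t b)
    · exact (le_total (e a) (e b)).imp (fun h' => hlex _ _ (.inr ⟨h, h'⟩))
        (fun h' => hlex _ _ (.inr ⟨h.symm, h'⟩))
    · exact (D.pred_chain x ha hb h).imp (fun h' => hlex _ _ (.inl (lt_of_le_of_ne h' h)))
        (fun h' => hlex _ _ (.inl (lt_of_le_of_ne h' h.symm)))
  obtain ⟨p, hp⟩ := exists_fin_coloring_of_wellFounded (r := (· < ·)) wellFounded_lt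
    (fun b => D.lam (t b) \ {b})
    fun b => ⟨Set.toFinite _, (Set.ncard_sdiff_singleton_lt_of_mem (ht b)).trans_le (hD _)⟩
  refine ⟨{
    le := (· ≤ ·)
    refl := le_refl
    antisymm := fun _ _ => le_antisymm
    trans := fun _ _ _ => le_trans
    pred_finite := fun _ => Set.toFinite _
    pred_chain := fun a b hb c hc _ => htotal b c (t a) (hmono _ _ hb) (hmono _ _ hc)
    cover := fun a a' h =>
      let ⟨x, hx, hx'⟩ := D.td2 a a' h
      htotal a a' x (hmin a x hx) (hmin a' x hx')
    peb := p
    peb_cond := fun v v' w h _ hvw hne hwv' => ?_ }⟩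
  obtain ⟨x, hx, hx'⟩ := D.td2 v v' h
  -- the least bag of `w` lies between those of `v` and `x`, so it contains `v`
  have hvw' : v ∈ D.lam (t w) :=
    D.mem_lam_of_le (ht v) hx (hmono _ _ hvw) (D.trans _ _ _ (hmono _ _ hwv') (hmin v' x hx'))
  exact hp v w (lt_of_le_of_ne hvw hne) ⟨hvw', hne⟩

end TreeDecomp

def TreeDecomp.univ (V : Type) (adj : V → V → Prop) : TreeDecomp V adj :=
  TreeDecomp.ofPrefix (α := Unit) (fun _ => Set.univ) (fun _ => ⟨[], trivial⟩)
    (fun _ _ _ => ⟨[], trivial, trivial⟩) (fun _ _ _ _ _ _ _ _ => trivial)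

theorem exists_treeDecomp_iff_nonempty_pkCoalgebra {σ : RelVocab} (𝒜 : RelStruct σ)
    [Finite 𝒜.carrier] (k : ℕ) :
    (∃ D : TreeDecomp 𝒜.carrier (gaif 𝒜), ∀ x, (D.lam x).Finite ∧ (D.lam x).ncard ≤ k)
      ↔ Nonempty (PkCoalgebra 𝒜 k) := by
  classical
  exact ⟨fun ⟨D, hD⟩ => (D.nonempty_pebbleForestCover fun x => (hD x).2).map (·.toPkCoalgebra),
    fun ⟨G⟩ => ⟨G.treeDecomp, fun l => ⟨G.treeDecomp_lam_finite l, G.ncard_treeDecomp_lam_le l⟩⟩⟩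

/-- The tree-width of a finite structure is one less than its `P`-coalgebra number:
for every `k ≥ 1`, the Gaifman graph of `𝒜` has a tree decomposition of width at most
`k - 1` (all bags of size at most `k`) iff there is a `P_k`-coalgebra on `𝒜`; hence
`tw(𝒜) + 1 = κ^P(𝒜)`. -/
theorem stmt13 (σ : RelVocab) (𝒜 : RelStruct σ) (hfin : Finite 𝒜.carrier) :
    (∀ k : ℕ, 1 ≤ k →
      ((∃ D : TreeDecomp 𝒜.carrier (gaif 𝒜), ∀ x, (D.lam x).Finite ∧ (D.lam x).ncard ≤ k)
        ↔ Nonempty (PkCoalgebra 𝒜 k))) ∧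
    sInf {w : ℕ | ∃ D : TreeDecomp 𝒜.carrier (gaif 𝒜),
        ∀ x, (D.lam x).Finite ∧ (D.lam x).ncard ≤ w + 1} + 1 =
      sInf {k : ℕ | 1 ≤ k ∧ Nonempty (PkCoalgebra 𝒜 k)} := by
  have hiff := exists_treeDecomp_iff_nonempty_pkCoalgebra 𝒜
  refine ⟨fun k _ => hiff k, ?_⟩
  have hne : ∃ k, 1 ≤ k ∧ Nonempty (PkCoalgebra 𝒜 k) :=
    ⟨Nat.card 𝒜.carrier + 1, by omega, (hiff _).mp ⟨TreeDecomp.univ _ _, fun _ =>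
      ⟨Set.toFinite _, by simp [TreeDecomp.univ, TreeDecomp.ofPrefix]⟩⟩⟩
  convert Nat.sInf_add (n := 1) (p := fun k => 1 ≤ k ∧ Nonempty (PkCoalgebra 𝒜 k))
    (Nat.sInf_mem hne).1 using 4 with w
  simp [hiff]
end PebbledPath
end
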